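/- Any sequence of cyclical and sequential moves transforming a k-clustering C into a k-clustering C' contains at least (1/2)·∑_i | |C_i| − |C'_i| | sequential moves; in particular the transformation distance satisfies d(C,C') ≥ (1/2)·∑_i δ_i. -/

import Mathlib

variable {X : Type*} [Fintype X] [DecidableEq X] {k : ℕ}

/-- The clustering-difference graph `CDG(c, c'')` (one edge `c x → c'' x` for each
item `x` with `c x ≠ c'' x`) is a single directed cycle: there are `m + 1` distinct
cluster indices `v 0, ..., v m` and the items moved are exactly one per edge
`v i → v (i+1)` (indices mod `m + 1`). -/
def IsCyclicalMove (c c'' : X → Fin k) : Prop :=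
  ∃ (m : ℕ) (v : Fin (m + 1) ↪ Fin k)
    (e : {x : X // c x ≠ c'' x} ≃ Fin (m + 1)),
    ∀ x : {x : X // c x ≠ c'' x}, c x.1 = v (e x) ∧ c'' x.1 = v (e x + 1)

/-- The clustering-difference graph `CDG(c, c'')` is a single directed path: there
are `m + 2` distinct cluster indices `v 0, ..., v (m+1)` and the items moved are
exactly one per edge `v i → v (i+1)`, `0 ≤ i ≤ m`. -/
def IsSequentialMove (c c'' : X → Fin k) : Prop :=
  ∃ (m : ℕ) (v : Fin (m + 2) ↪ Fin k)
    (e : {x : X // c x ≠ c'' x} ≃ Fin (m + 1)),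
    ∀ x : {x : X // c x ≠ c'' x}, c x.1 = v (e x).castSucc ∧ c'' x.1 = v (e x).succ

/-- An elementary move: a cyclical or a sequential move. -/
def IsMove (c c'' : X → Fin k) : Prop :=
  IsCyclicalMove c c'' ∨ IsSequentialMove c c''

/-- The transformation distance: the minimum number of elementary moves needed to
transform `c` into `c'`. -/
noncomputable def transDist (c c' : X → Fin k) : ℕ :=
  sInf {n | ∃ f : ℕ → X → Fin k, f 0 = c ∧ f n = c' ∧ ∀ i < n, IsMove (f i) (f (i + 1))}

/-- The size of cluster `i` in the clustering `c`. -/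
def clusterSize (c : X → Fin k) (i : Fin k) : ℕ :=
  (Finset.univ.filter fun x => c x = i).card

/-- The outdegree of vertex `i` in `CDG(c, c')`. -/
def cdgOutdeg (c c' : X → Fin k) (i : Fin k) : ℕ :=
  (Finset.univ.filter fun x => c x = i ∧ c' x ≠ i).card

/-- The indegree of vertex `i` in `CDG(c, c')`. -/
def cdgIndeg (c c' : X → Fin k) (i : Fin k) : ℕ :=
  (Finset.univ.filter fun x => c' x = i ∧ c x ≠ i).card

/-- The shared degree of vertex `i` in `CDG(c, c')`. -/
def sharedDeg (c c' : X → Fin k) (i : Fin k) : ℕ :=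
  min (cdgIndeg c c' i) (cdgOutdeg c c' i)

/-!
Cluster sizes only change through the moved items, and a vertex of the clustering-difference
graph gains exactly its in-degree and loses its out-degree. On a directed cycle every vertex has
equal in- and out-degree, so a cyclical move preserves all sizes; on a directed path only the two
endpoints are unbalanced, so a sequential move changes `∑ᵢ δᵢ` by at most `2`. By the triangle
inequality for `∑ᵢ δᵢ`, a sequence of moves with `s` sequential ones achieves `∑ᵢ δᵢ ≤ 2 s`.
-/

section

open Finset Function Relation

theorem Finset.card_filter_eq_of_subtypeEquiv {α β : Type*} [Fintype α] [Fintype β]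
    {q : α → Prop} (e : {a // q a} ≃ β) {P : α → Prop} [DecidablePred P]
    {Q : β → Prop} [DecidablePred Q] (hPq : ∀ a, P a → q a) (hPQ : ∀ a, P a.1 ↔ Q (e a)) :
    #{a | P a} = #{b | Q b} := by
  rw [← Fintype.card_subtype, ← Fintype.card_subtype]
  exact Fintype.card_congr <|
    (Equiv.subtypeSubtypeEquivSubtype (hPq _)).symm.trans (e.subtypeEquiv hPQ)

theorem Fin.card_filter_castSucc_add_ite_last {α : Type*} [DecidableEq α] {m : ℕ}
    (w : Fin (m + 2) → α) (a : α) :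
    #{j : Fin (m + 1) | w j.castSucc = a} + (if w (Fin.last _) = a then 1 else 0) =
      (if w 0 = a then 1 else 0) + #{j : Fin (m + 1) | w j.succ = a} := by
  simp only [card_filter, ← Fin.sum_univ_castSucc (fun j => if w j = a then 1 else 0),
    ← Fin.sum_univ_succ (fun j => if w j = a then 1 else 0)]

theorem Fin.card_filter_add_one_eq {α : Type*} [DecidableEq α] {m : ℕ} (w : Fin (m + 1) → α)
    (a : α) :
    #{j | w (j + 1) = a} = #{j | w j = a} := by
  simp only [card_filter]
  exact Equiv.sum_comp (Equiv.addRight 1) fun j => if w j = a then 1 else 0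

theorem Relation.ReflTransGen.exists_seq {α : Type*} {r : α → α → Prop} {a b : α}
    (h : ReflTransGen r a b) :
    ∃ n, ∃ f : ℕ → α, f 0 = a ∧ f n = b ∧ ∀ i < n, r (f i) (f (i + 1)) := by
  induction h with
  | refl => exact ⟨0, fun _ => a, rfl, rfl, by simp⟩
  | @tail b c _ hbc ih =>
    obtain ⟨n, f, hf0, hfn, hf⟩ := ih
    refine ⟨n + 1, fun i => if i ≤ n then f i else c, by simpa using hf0, by simp, ?_⟩
    intro i hi
    rcases Nat.lt_succ_iff_lt_or_eq.mp hi with hi | rfl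
    · simpa [hi.le, Nat.succ_le_of_lt hi] using hf i hi
    · simpa [hfn] using hbc

theorem Function.reflTransGen_of_update {α β : Type*} [Fintype α] [DecidableEq α]
    {r : (α → β) → (α → β) → Prop} (hr : ∀ f x b, f x ≠ b → r f (update f x b))
    (f g : α → β) : ReflTransGen r f g := by
  suffices ∀ s : Finset α, ∀ f : α → β, (∀ x ∉ s, f x = g x) → ReflTransGen r f g from
    this univ f (by simp)
  intro s
  induction s using Finset.induction_on with
  | empty => exact fun f hf => funext (by simpa using hf) ▸ ReflTransGen.refl
  | insert a s _ ih =>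
    intro f hf
    have hupdate : ∀ x ∉ s, update f a (g a) x = g x := by
      intro x hx
      rcases eq_or_ne x a with rfl | hxa
      · simp
      · simpa [hxa] using hf x (by simp [hxa, hx])
    by_cases hfa : f a = g a
    · rw [← hfa, update_eq_self] at hupdate
      exact ih f hupdate
    · exact ReflTransGen.head (hr f a (g a) hfa) (ih _ hupdate)

-- The paper's `∑ᵢ δᵢ`.
def clusterSizeDist (c c' : X → Fin k) : ℕ :=
  ∑ i, Nat.dist (clusterSize c i) (clusterSize c' i)

omit [DecidableEq X] in
theorem clusterSizeDist_triangle (c₁ c₂ c₃ : X → Fin k) :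
    clusterSizeDist c₁ c₃ ≤ clusterSizeDist c₁ c₂ + clusterSizeDist c₂ c₃ := by
  rw [clusterSizeDist, clusterSizeDist, clusterSizeDist, ← sum_add_distrib]
  exact sum_le_sum fun i _ => Nat.dist.triangle_inequality _ _ _

omit [DecidableEq X] in
theorem clusterSize_add_cdgIndeg (c c'' : X → Fin k) (i : Fin k) :
    clusterSize c i + cdgIndeg c c'' i = clusterSize c'' i + cdgOutdeg c c'' i := by
  simp only [clusterSize, cdgIndeg, cdgOutdeg, card_filter, ← sum_add_distrib]
  refine sum_congr rfl fun x _ => ?_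
  by_cases h₁ : c x = i <;> by_cases h₂ : c'' x = i <;> simp [h₁, h₂]

section MoveDescription

variable {n : ℕ} {c c'' : X → Fin k} (e : {x // c x ≠ c'' x} ≃ Fin n) {s t : Fin n → Fin k}

omit [DecidableEq X] in
theorem cdgOutdeg_eq_card_filter (h : ∀ x, c x.1 = s (e x) ∧ c'' x.1 = t (e x)) (i : Fin k) :
    cdgOutdeg c c'' i = #{j | s j = i} :=
  card_filter_eq_of_subtypeEquiv e (fun _ hx hcx => hx.2 (hcx ▸ hx.1)) fun x =>
    ⟨fun hx => (h x).1 ▸ hx.1,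
      fun hs => ⟨(h x).1.trans hs, fun hc => x.2 ((h x).1.trans hs ▸ hc.symm)⟩⟩

omit [DecidableEq X] in
theorem cdgIndeg_eq_card_filter (h : ∀ x, c x.1 = s (e x) ∧ c'' x.1 = t (e x)) (i : Fin k) :
    cdgIndeg c c'' i = #{j | t j = i} :=
  card_filter_eq_of_subtypeEquiv e (fun _ hx hcx => hx.2 (hcx.trans hx.1)) fun x =>
    ⟨fun hx => (h x).2 ▸ hx.1,
      fun ht => ⟨(h x).2.trans ht, fun hc => x.2 (hc.trans ((h x).2.trans ht).symm)⟩⟩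

omit [DecidableEq X] in
theorem clusterSize_add_card_filter (h : ∀ x, c x.1 = s (e x) ∧ c'' x.1 = t (e x))
    (i : Fin k) : clusterSize c i + #{j | t j = i} = clusterSize c'' i + #{j | s j = i} := by
  rw [← cdgOutdeg_eq_card_filter e h, ← cdgIndeg_eq_card_filter e h]
  exact clusterSize_add_cdgIndeg c c'' i

end MoveDescription

omit [DecidableEq X] in
theorem IsCyclicalMove.clusterSize_eq {c c'' : X → Fin k} (h : IsCyclicalMove c c'')
    (i : Fin k) : clusterSize c i = clusterSize c'' i := by
  obtain ⟨m, v, e, hv⟩ := h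
  have := clusterSize_add_card_filter e (s := v) (t := fun j => v (j + 1)) hv i
  rw [Fin.card_filter_add_one_eq] at this
  omega

omit [DecidableEq X] in
theorem IsCyclicalMove.clusterSizeDist_eq_zero {c c'' : X → Fin k} (h : IsCyclicalMove c c'') :
    clusterSizeDist c c'' = 0 :=
  sum_eq_zero fun i _ => by rw [h.clusterSize_eq i, Nat.dist_self]

omit [DecidableEq X] in
theorem IsSequentialMove.clusterSizeDist_le_two {c c'' : X → Fin k}
    (h : IsSequentialMove c c'') : clusterSizeDist c c'' ≤ 2 := by
  obtain ⟨m, v, e, hv⟩ := h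
  have hdist (i : Fin k) : Nat.dist (clusterSize c i) (clusterSize c'' i) ≤
      (if v 0 = i then 1 else 0) + (if v (Fin.last _) = i then 1 else 0) := by
    have hbal := clusterSize_add_card_filter e (s := fun j => v j.castSucc)
      (t := fun j => v j.succ) hv i
    have hpath := Fin.card_filter_castSucc_add_ite_last v i
    unfold Nat.dist
    omega
  calc clusterSizeDist c c''
      ≤ ∑ i, ((if v 0 = i then 1 else 0) + (if v (Fin.last _) = i then 1 else 0)) :=
        sum_le_sum fun i _ => hdist i
    _ = 2 := by simp [sum_add_distrib]

omit [Fintype X] in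
theorem isSequentialMove_update {c : X → Fin k} {x : X} {b : Fin k} (hx : c x ≠ b) :
    IsSequentialMove c (update c x b) := by
  have hmoved (y : {y // c y ≠ update c x b y}) : y.1 = x :=
    by_contra fun hyx => y.2 (update_of_ne hyx b c).symm
  let : Unique {y // c y ≠ update c x b y} :=
    { default := ⟨x, by simpa using hx⟩, uniq := fun y => Subtype.ext (hmoved y) }
  refine ⟨0, Embedding.embFinTwo hx, Equiv.ofUnique _ (Fin 1), fun y => ?_⟩
  rw [hmoved y, Fin.fin_one_eq_zero (Equiv.ofUnique _ _ y)]
  exact ⟨rfl, update_self x b c⟩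

-- Needed because `transDist` is an `sInf` over ℕ, which would be `0` if no sequence existed.
theorem exists_isMove_seq (c c' : X → Fin k) :
    ∃ n, ∃ f : ℕ → X → Fin k, f 0 = c ∧ f n = c' ∧ ∀ i < n, IsMove (f i) (f (i + 1)) :=
  (reflTransGen_of_update (fun _ _ _ hx => Or.inr (isSequentialMove_update hx)) c c').exists_seq

open scoped Classical in
omit [DecidableEq X] in
theorem clusterSizeDist_le_two_mul_card_isSequentialMove {f : ℕ → X → Fin k} {n : ℕ}
    (hf : ∀ i < n, IsMove (f i) (f (i + 1))) :
    clusterSizeDist (f 0) (f n) ≤ 2 * #{i ∈ range n | IsSequentialMove (f i) (f (i + 1))} := by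
  induction n with
  | zero => simp [clusterSizeDist]
  | succ n ih =>
    have ih := ih fun i hi => hf i (Nat.lt_succ_of_lt hi)
    have htri := clusterSizeDist_triangle (f 0) (f n) (f (n + 1))
    rw [range_add_one, filter_insert]
    by_cases hseq : IsSequentialMove (f n) (f (n + 1))
    · rw [if_pos hseq, card_insert_of_notMem (by simp)]
      have := hseq.clusterSizeDist_le_two
      omega
    · rw [if_neg hseq]
      have := ((hf n n.lt_succ_self).resolve_right hseq).clusterSizeDist_eq_zero
      omega

end

open scoped Classical in
/-- Any sequence of elementary moves transforming `c` into `c'` contains at least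
`(1/2) ∑ᵢ δᵢ` sequential moves, where `δᵢ` is the absolute change in size of
cluster `i`; in particular `d(c, c') ≥ (1/2) ∑ᵢ δᵢ`. -/
theorem stmt_7 (c c' : X → Fin k) :
    (∀ (n : ℕ) (f : ℕ → X → Fin k), f 0 = c → f n = c' →
      (∀ i < n, IsMove (f i) (f (i + 1))) →
      (∑ i : Fin k, Nat.dist (clusterSize c i) (clusterSize c' i)) / 2 ≤
        ((Finset.range n).filter fun i => IsSequentialMove (f i) (f (i + 1))).card) ∧
    (∑ i : Fin k, Nat.dist (clusterSize c i) (clusterSize c' i)) / 2 ≤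
      transDist c c' := by
  have hseq : ∀ (n : ℕ) (f : ℕ → X → Fin k), f 0 = c → f n = c' →
      (∀ i < n, IsMove (f i) (f (i + 1))) →
      clusterSizeDist c c' / 2 ≤
        ((Finset.range n).filter fun i => IsSequentialMove (f i) (f (i + 1))).card := by
    rintro n f rfl rfl hf
    have := clusterSizeDist_le_two_mul_card_isSequentialMove hf
    omega
  refine ⟨hseq, le_csInf (exists_isMove_seq c c') ?_⟩
  rintro n ⟨f, hf0, hfn, hf⟩
  exact (hseq n f hf0 hfn hf).trans ((Finset.card_filter_le _ _).trans (Finset.card_range n).le)
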